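/- Let A ∈ ℝ^{d×d} be positive definite, let M, M* ∈ ℝ^{d×d'} with ‖A^{1/2}(M − M*)‖_F ≤ √β for some β > 0, let φ ∈ ℝ^d with w = √(φᵀ A^{-1} φ), and let η ∈ ℝ^{d'}. Then |2 φᵀ (M − M*) η / (1 + w²)| ≤ 2 ‖η‖₂ · √β · min(w, 1/2). -/

import Mathlib

open Matrix Finset

/-- The Frobenius norm of a matrix. -/
noncomputable def frobNorm {d d' : ℕ} (Y : Matrix (Fin d) (Fin d') ℝ) : ℝ :=
  Real.sqrt (∑ i, ∑ j, (Y i j) ^ 2)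

section

open scoped ComplexOrder

/-- The positive semidefinite square root of a positive semidefinite matrix
(definition of `Matrix.PosSemidef.sqrt` from the older Mathlib, since removed). -/
noncomputable def Matrix.PosSemidef.sqrt {n 𝕜 : Type*} [Fintype n] [RCLike 𝕜] [DecidableEq n]
    {A : Matrix n n 𝕜} (hA : A.PosSemidef) : Matrix n n 𝕜 :=
  hA.1.eigenvectorUnitary.1 * diagonal ((↑) ∘ (√·) ∘ hA.1.eigenvalues) *
  (star hA.1.eigenvectorUnitary : Matrix n n 𝕜)

end

/-! Write `S = A^{1/2}` and `ψ = S⁻¹φ`, so that `w² = ‖ψ‖²` and `φᵀBη = ψᵀ(SB)η` with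
`‖SBη‖ ≤ ‖SB‖_F ‖η‖ ≤ √β ‖η‖`. Cauchy–Schwarz gives `|φᵀBη| ≤ w √β ‖η‖`, and it remains to
divide by `1 + w²` using `w / (1 + w²) ≤ min w (1/2)`. -/

section

open scoped ComplexOrder

variable {n 𝕜 : Type*} [Fintype n] [RCLike 𝕜] [DecidableEq n] {A : Matrix n n 𝕜}

lemma Matrix.PosSemidef.sqrt_mul_self (hA : A.PosSemidef) : hA.sqrt * hA.sqrt = A := by
  have hU : (star hA.1.eigenvectorUnitary : Matrix n n 𝕜) * hA.1.eigenvectorUnitary.1 = 1 :=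
    Unitary.coe_star_mul_self _
  have hD : diagonal (((↑) ∘ (√·) ∘ hA.1.eigenvalues : n → 𝕜)) *
      diagonal ((↑) ∘ (√·) ∘ hA.1.eigenvalues) = diagonal (RCLike.ofReal ∘ hA.1.eigenvalues) := by
    rw [diagonal_mul_diagonal]
    congr 1; funext i
    simp only [Function.comp_apply, ← RCLike.ofReal_mul,
      Real.mul_self_sqrt (hA.eigenvalues_nonneg i)]
  conv_rhs => rw [hA.1.spectral_theorem]
  rw [Unitary.conjStarAlgAut_apply, ← hD]
  simp only [Matrix.PosSemidef.sqrt, Matrix.mul_assoc]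
  rw [← Matrix.mul_assoc _ _ (diagonal _ * _), hU, Matrix.one_mul]

lemma Matrix.PosSemidef.posSemidef_sqrt (hA : A.PosSemidef) : hA.sqrt.PosSemidef := by
  have h : (star hA.1.eigenvectorUnitary : Matrix n n 𝕜) = (hA.1.eigenvectorUnitary.1)ᴴ := rfl
  rw [Matrix.PosSemidef.sqrt, h]
  apply PosSemidef.mul_mul_conjTranspose_same
  rw [posSemidef_diagonal_iff]
  intro i
  simp [Real.sqrt_nonneg]

end

section

variable {n m : Type*} [Fintype n] [Fintype m]

lemma abs_dotProduct_le_sqrt_mul_sqrt (x y : n → ℝ) :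
    |x ⬝ᵥ y| ≤ √(∑ i, x i ^ 2) * √(∑ i, y i ^ 2) := by
  rw [← Real.sqrt_sq_eq_abs, ← Real.sqrt_mul (by positivity)]
  exact Real.sqrt_le_sqrt (sum_mul_sq_le_sq_mul_sq univ x y)

variable [DecidableEq n] {S : Matrix n n ℝ}

lemma Matrix.IsSymm.dotProduct_mul_self_inv_mulVec (hS : S.IsSymm) (φ : n → ℝ) :
    φ ⬝ᵥ ((S * S)⁻¹ *ᵥ φ) = ∑ i, (S⁻¹ *ᵥ φ) i ^ 2 := by
  have hSinv : S⁻¹ᵀ = S⁻¹ := by rw [transpose_nonsing_inv, hS.eq]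
  rw [mul_inv_rev, ← mulVec_mulVec, dotProduct_mulVec, ← mulVec_transpose, hSinv]
  simp only [dotProduct, sq]

lemma Matrix.IsSymm.dotProduct_mulVec_eq (hS : S.IsSymm) (hdet : IsUnit S.det)
    (B : Matrix n m ℝ) (φ : n → ℝ) (η : m → ℝ) :
    φ ⬝ᵥ (B *ᵥ η) = (S⁻¹ *ᵥ φ) ⬝ᵥ ((S * B) *ᵥ η) := by
  rw [← mulVec_mulVec, dotProduct_mulVec (S⁻¹ *ᵥ φ), ← mulVec_transpose, hS.eq, mulVec_mulVec,
    mul_nonsing_inv _ hdet, one_mulVec]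

end

lemma sqrt_sum_sq_mulVec_le_frobNorm_mul {d d' : ℕ} (Y : Matrix (Fin d) (Fin d') ℝ)
    (η : Fin d' → ℝ) : √(∑ i, (Y *ᵥ η) i ^ 2) ≤ frobNorm Y * √(∑ j, η j ^ 2) := by
  rw [frobNorm, ← Real.sqrt_mul (by positivity), sum_mul]
  exact Real.sqrt_le_sqrt <| sum_le_sum fun i _ => sum_mul_sq_le_sq_mul_sq univ (Y i) η

lemma abs_dotProduct_mulVec_le_of_posDef {d d' : ℕ} {A : Matrix (Fin d) (Fin d) ℝ}
    (hA : A.PosDef) (B : Matrix (Fin d) (Fin d') ℝ) (φ : Fin d → ℝ) (η : Fin d' → ℝ) :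
    |φ ⬝ᵥ (B *ᵥ η)| ≤
      √(φ ⬝ᵥ (A⁻¹ *ᵥ φ)) * (frobNorm (hA.posSemidef.sqrt * B) * √(∑ j, η j ^ 2)) := by
  set S := hA.posSemidef.sqrt
  have hSS : S * S = A := hA.posSemidef.sqrt_mul_self
  have hS : S.IsSymm := hA.posSemidef.posSemidef_sqrt.1
  have hdet : IsUnit S.det := by
    refine isUnit_iff_ne_zero.2 fun h => hA.det_pos.ne' ?_
    rw [← hSS, det_mul, h, zero_mul]
  rw [hS.dotProduct_mulVec_eq hdet, ← hSS, hS.dotProduct_mul_self_inv_mulVec]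
  exact (abs_dotProduct_le_sqrt_mul_sqrt _ _).trans <|
    mul_le_mul_of_nonneg_left (sqrt_sum_sq_mulVec_le_frobNorm_mul _ _) (Real.sqrt_nonneg _)

lemma div_one_add_sq_le_min {w : ℝ} (hw : 0 ≤ w) : w / (1 + w ^ 2) ≤ min w (1 / 2) := by
  refine le_min ?_ ?_ <;> rw [div_le_iff₀ (by positivity)] <;> nlinarith [sq_nonneg (w - 1)]

theorem martingale_increment_bound_general {d d' : ℕ}
    (A : Matrix (Fin d) (Fin d) ℝ) (hA : A.PosDef)
    (M Mstar : Matrix (Fin d) (Fin d') ℝ) (β : ℝ)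
    (hball : frobNorm (hA.posSemidef.sqrt * (M - Mstar)) ≤ Real.sqrt β)
    (φ : Fin d → ℝ) (w : ℝ) (hw : w = Real.sqrt (φ ⬝ᵥ (A⁻¹ *ᵥ φ)))
    (η : Fin d' → ℝ) :
    |2 * (φ ⬝ᵥ ((M - Mstar) *ᵥ η)) / (1 + w ^ 2)| ≤
      2 * Real.sqrt (∑ j, (η j) ^ 2) * Real.sqrt β * min w (1 / 2) := by
  have hw0 : 0 ≤ w := hw ▸ Real.sqrt_nonneg _
  have hbilin : |φ ⬝ᵥ ((M - Mstar) *ᵥ η)| ≤ w * (√β * √(∑ j, η j ^ 2)) := by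
    rw [hw]
    exact (abs_dotProduct_mulVec_le_of_posDef hA _ φ η).trans <| by gcongr
  calc |2 * (φ ⬝ᵥ ((M - Mstar) *ᵥ η)) / (1 + w ^ 2)|
      = 2 * |φ ⬝ᵥ ((M - Mstar) *ᵥ η)| / (1 + w ^ 2) := by
        rw [abs_div, abs_mul, abs_two, abs_of_pos (by positivity : (0 : ℝ) < 1 + w ^ 2)]
    _ ≤ 2 * (w * (√β * √(∑ j, η j ^ 2))) / (1 + w ^ 2) := by gcongr
    _ = 2 * √(∑ j, η j ^ 2) * √β * (w / (1 + w ^ 2)) := by ring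
    _ ≤ 2 * √(∑ j, η j ^ 2) * √β * min w (1 / 2) := by
        gcongr
        exact div_one_add_sq_le_min hw0

/-- Uniform bound on the martingale increments `|G_{n,h}|` in Lemma 9:
if `‖A^{1/2}(M − M*)‖_F ≤ √β` and `w = √(φᵀ A⁻¹ φ)` then
`|2 φᵀ(M − M*)η / (1 + w²)| ≤ 2‖η‖₂ √β min(w, 1/2)`. -/
theorem martingale_increment_bound {d d' : ℕ}
    (A : Matrix (Fin d) (Fin d) ℝ) (hA : A.PosDef)
    (M Mstar : Matrix (Fin d) (Fin d') ℝ) (β : ℝ) (hβ : 0 < β)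
    (hball : frobNorm (hA.posSemidef.sqrt * (M - Mstar)) ≤ Real.sqrt β)
    (φ : Fin d → ℝ) (w : ℝ) (hw : w = Real.sqrt (φ ⬝ᵥ (A⁻¹ *ᵥ φ)))
    (η : Fin d' → ℝ) :
    |2 * (φ ⬝ᵥ ((M - Mstar) *ᵥ η)) / (1 + w ^ 2)| ≤
      2 * Real.sqrt (∑ j, (η j) ^ 2) * Real.sqrt β * min w (1 / 2) :=
  martingale_increment_bound_general A hA M Mstar β hball φ w hw η
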